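/- arXiv:2010.06956 — 2 statements merged into one kernel-verified Lean document; each statement's English description precedes it below -/
import Mathlib

section
/- Suppose f ∈ Sym ℝ⟨X⟩ is quadratic, i.e., deg(f) = 2. Then the first step of the term-sparsity hierarchy is already exact: λ_1(f) = λ_min(f). Equivalently, with monomial basis B = {1, X_1, …, X_n} and G_0 the tsp graph of f, if f admits a positive semidefinite Gram matrix indexed by B, then f admits a positive semidefinite Gram matrix lying in S_+^{n+1} ∩ S_{G_0}. -/
open scoped Classical BigOperators RealInnerProductSpace

noncomputable section

/-- Words in `n` noncommuting letters `X_1, …, X_n`. -/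
abbrev Word (n : ℕ) := List (Fin n)

/-- The involution `⋆` on words: it fixes the letters pointwise and reverses words. -/
def wstar {n : ℕ} (w : Word n) : Word n := w.reverse

/-- Noncommutative polynomials with real coefficients in `n` noncommuting letters,
represented as finitely supported coefficient functions on words. -/
abbrev NCPoly (n : ℕ) := Word n →₀ ℝ

/-- The involution `⋆` on nc polynomials. -/
def ncStar {n : ℕ} (f : NCPoly n) : NCPoly n :=
  Finsupp.equivMapDomain
    ⟨wstar, wstar, fun w => List.reverse_reverse w, fun w => List.reverse_reverse w⟩ f

/-- `f ∈ Sym ℝ⟨X⟩`, i.e. `f⋆ = f`. -/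
def IsSymNC {n : ℕ} (f : NCPoly n) : Prop := ncStar f = f

/-- The degree of an nc polynomial: the length of the longest word in its support. -/
def ncDeg {n : ℕ} (f : NCPoly n) : ℕ := f.support.sup List.length

/-- `⌈k/2⌉`. -/
def ceilHalf (k : ℕ) : ℕ := (k + 1) / 2

/-- The Riesz functional `L_y` associated with a moment sequence `y`. -/
def Ly {n : ℕ} (y : Word n → ℝ) (f : NCPoly n) : ℝ := f.sum fun w a => a * y w

/-- Words of length exactly `k`. -/
def wordsLen (n : ℕ) : ℕ → Finset (Word n)
  | 0 => {([] : Word n)}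
  | k + 1 => ((Finset.univ : Finset (Fin n)) ×ˢ wordsLen n k).image fun p => p.1 :: p.2

/-- `W_d`: the words of degree at most `d`. -/
def Wd (n d : ℕ) : Finset (Word n) := (Finset.range (d + 1)).biUnion (wordsLen n)

/-- `B² = {u⋆u : u ∈ B}`. -/
def Bsq {n : ℕ} (B : Finset (Word n)) : Set (Word n) := {w | ∃ u ∈ B, w = wstar u ++ u}

/-- The localizing matrix `M(g y)` indexed by the word set `B`,
with entries `L_y(u⋆ g v)`.  For `g = 1` this is the moment matrix. -/
def locMat {n : ℕ} (B : Finset (Word n)) (g : NCPoly n) (y : Word n → ℝ) :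
    Matrix ↥B ↥B ℝ := fun u v => g.sum fun w a => a * y (wstar u.1 ++ w ++ v.1)

/-- The moment matrix `M_B(y)`, with entries `y_{u⋆v}`. -/
def momMat {n : ℕ} (B : Finset (Word n)) (y : Word n → ℝ) : Matrix ↥B ↥B ℝ :=
  fun u v => y (wstar u.1 ++ v.1)

/-- `B_G ∘ M ∈ Π_G(𝕊₊)` : the partial matrix given by the entries of `M` on the diagonal and on
the edges of `G` admits a positive semidefinite completion. -/
def Completable {n : ℕ} (B : Finset (Word n)) (G : SimpleGraph (Word n))
    (M : Matrix ↥B ↥B ℝ) : Prop :=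
  ∃ P : Matrix ↥B ↥B ℝ, P.PosSemidef ∧ ∀ u v : ↥B, (u = v ∨ G.Adj u.1 v.1) → P u v = M u v

/-- `Q ∈ 𝕊_G` : `Q` vanishes on non-edges off the diagonal. -/
def SparsityPattern {n : ℕ} (B : Finset (Word n)) (G : SimpleGraph (Word n))
    (Q : Matrix ↥B ↥B ℝ) : Prop :=
  ∀ u v : ↥B, ¬(u = v ∨ G.Adj u.1 v.1) → Q u v = 0

/-- The support of a graph with word nodes: `supp(G) = {u⋆v : {u,v} ∈ E(G)}`. -/
def gsupp {n : ℕ} (G : SimpleGraph (Word n)) : Set (Word n) :=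
  {w | ∃ u v, G.Adj u v ∧ w = wstar u ++ v}

/-- `supp_g(G) = {u⋆wv : {u,v} ∈ E(G), w ∈ supp(g)}`. -/
def gsuppP {n : ℕ} (g : NCPoly n) (G : SimpleGraph (Word n)) : Set (Word n) :=
  {s | ∃ u v w, G.Adj u v ∧ w ∈ g.support ∧ s = wstar u ++ w ++ v}

/-- A graph has all its edges inside the node set `V`. -/
def EdgesIn {n : ℕ} (V : Finset (Word n)) (G : SimpleGraph (Word n)) : Prop :=
  ∀ u v, G.Adj u v → u ∈ V ∧ v ∈ V

/-- Cyclic successor on `Fin m`. -/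
def cycSucc {m : ℕ} (hm : 0 < m) (i : Fin m) : Fin m := ⟨(i.1 + 1) % m, Nat.mod_lt _ hm⟩

/-- A graph is chordal if every cycle of length at least 4 has a chord. -/
def IsChordal {V : Type*} (G : SimpleGraph V) : Prop :=
  ∀ (m : ℕ) (hm : 4 ≤ m) (c : Fin m → V), Function.Injective c →
    (∀ i, G.Adj (c i) (c (cycSucc (by omega) i))) →
      ∃ i j, G.Adj (c i) (c j) ∧ cycSucc (by omega) i ≠ j ∧ cycSucc (by omega) j ≠ i

/-- The maximal chordal extension: the chordal extension completing every connected component. -/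
def maxCE {n : ℕ} (G : SimpleGraph (Word n)) : SimpleGraph (Word n) where
  Adj u v := u ≠ v ∧ G.Reachable u v
  symm := ⟨fun _ _ h => ⟨h.1.symm, h.2.symm⟩⟩
  loopless := ⟨fun _ h => h.1 rfl⟩

/-- An abstract chordal-extension operation `G ↦ Ḡ` on graphs with nodes inside a finite word
set: it contains the original graph, returns chordal graphs on the same node set, and is
monotone (`G ⊆ H ⟹ Ḡ ⊆ H̄`, also with respect to enlarging the node set). -/
structure ChordalExt (n : ℕ) where
  ce : Finset (Word n) → SimpleGraph (Word n) → SimpleGraph (Word n)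
  le_ce : ∀ V G, G ≤ ce V G
  chordal : ∀ V G, IsChordal (ce V G)
  edges_in : ∀ V G, EdgesIn V G → EdgesIn V (ce V G)
  mono : ∀ V V' G H, V ⊆ V' → G ≤ H → ce V G ≤ ce V' H

/-- Evaluation of an nc polynomial at a tuple of elements of an ℝ-algebra. -/
def evalNC {n : ℕ} {R : Type*} [Ring R] [Algebra ℝ R] (f : NCPoly n) (A : Fin n → R) : R :=
  f.sum fun w a => a • (w.map A).prod

/-- `λ_min(f)`: the smallest eigenvalue that `f` attains on tuples of real symmetric matrices,
`λ_min(f) = inf{⟨f(A)v, v⟩ : A ∈ (𝕊^r)^n, r ∈ ℕ∖{0}, ‖v‖ = 1}`. -/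
def lambdaMin {n : ℕ} (f : NCPoly n) : ℝ :=
  sInf {c | ∃ (r : ℕ) (A : Fin n → Matrix (Fin (r + 1)) (Fin (r + 1)) ℝ)
      (v : Fin (r + 1) → ℝ),
    (∀ i, (A i).IsSymm) ∧ (∑ i, v i ^ 2) = 1 ∧
      c = dotProduct v ((evalNC f A).mulVec v)}

/-- The constant polynomial `1`. -/
def ncOne {n : ℕ} : NCPoly n := Finsupp.single [] 1

/-! ### Term sparsity for unconstrained eigenvalue optimization -/

/-- The support-extension operation `SE(G)` relative to the monomial basis `B`:
`u ≠ v` are joined whenever `u⋆v ∈ supp(G) ∪ B²`. -/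
def SE {n : ℕ} (B : Finset (Word n)) (G : SimpleGraph (Word n)) : SimpleGraph (Word n) :=
  SimpleGraph.fromRel fun u v => u ∈ B ∧ v ∈ B ∧ wstar u ++ v ∈ gsupp G ∪ Bsq B

/-- The term sparsity pattern (tsp) graph `G₀` of `f` with node set `B`:
`u ≠ v` are joined whenever `u⋆v ∈ supp(f) ∪ B²`. -/
def tspU {n : ℕ} (B : Finset (Word n)) (f : NCPoly n) : SimpleGraph (Word n) :=
  SimpleGraph.fromRel fun u v =>
    u ∈ B ∧ v ∈ B ∧ wstar u ++ v ∈ (↑f.support : Set (Word n)) ∪ Bsq B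

/-- The term-sparsity graph sequence `(G_k)`: alternate support extension and
chordal extension starting from the tsp graph. -/
def GseqU {n : ℕ} (E : ChordalExt n) (B : Finset (Word n)) (f : NCPoly n) :
    ℕ → SimpleGraph (Word n)
  | 0 => tspU B f
  | k + 1 => E.ce B (SE B (GseqU E B f k))

/-- The term-sparsity graph sequence built with the maximal chordal extension. -/
def GseqUMax {n : ℕ} (B : Finset (Word n)) (f : NCPoly n) : ℕ → SimpleGraph (Word n)
  | 0 => tspU B f
  | k + 1 => maxCE (SE B (GseqUMax B f k))

/-- The optimal value `λ_k(f)` of the sparse moment relaxation `(EP^k)` associated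
to the graph `G`. -/
def epVal {n : ℕ} (B : Finset (Word n)) (G : SimpleGraph (Word n)) (f : NCPoly n) : ℝ :=
  sInf {r | ∃ y : Word n → ℝ, r = Ly y f ∧ y [] = 1 ∧ Completable B G (momMat B y)}

/-- The optimal value of the dense moment relaxation `(EP)`. -/
def epDenseVal {n : ℕ} (B : Finset (Word n)) (f : NCPoly n) : ℝ :=
  sInf {r | ∃ y : Word n → ℝ, r = Ly y f ∧ y [] = 1 ∧ (momMat B y).PosSemidef}

/-- `⟨Q, D_w⟩` where `M(g y) = Σ_w D_w y_w`: the coefficient pairing appearing in the dual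
SOHS relaxations. -/
def pairingD {n : ℕ} (B : Finset (Word n)) (g : NCPoly n) (Q : Matrix ↥B ↥B ℝ)
    (w : Word n) : ℝ :=
  ∑ u : ↥B, ∑ v : ↥B, (g.sum fun s a => if wstar u.1 ++ s ++ v.1 = w then a else 0) * Q u v

/-- The optimal value of the dual sparse SOHS relaxation `(EP^k)*` associated to `G`. -/
def epDualVal {n : ℕ} (B : Finset (Word n)) (G : SimpleGraph (Word n)) (f : NCPoly n) : ℝ :=
  sSup {l | ∃ Q : Matrix ↥B ↥B ℝ, Q.PosSemidef ∧ SparsityPattern B G Q ∧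
    ∀ w ∈ gsupp G ∪ Bsq B,
      pairingD B ncOne Q w + (if w = ([] : Word n) then l else 0) = f w}

/-- The monomial basis `{1, X_1, …, X_n}`. -/
def quadBasis (n : ℕ) : Finset (Word n) :=
  insert ([] : Word n) ((Finset.univ : Finset (Fin n)).image fun i => ([i] : Word n))

/-! ### Term sparsity for constrained eigenvalue optimization -/

/-- `g_0 = 1, g_1, …, g_m`. -/
def gAug {n m : ℕ} (g : Fin m → NCPoly n) : Fin (m + 1) → NCPoly n :=
  Fin.cases ncOne g

/-- `d_0 = 0, d_j = ⌈deg(g_j)/2⌉`. -/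
def dAug {n m : ℕ} (g : Fin m → NCPoly n) : Fin (m + 1) → ℕ :=
  Fin.cases 0 fun j => ceilHalf (ncDeg (g j))

/-- `d = max{⌈deg f/2⌉, d_1, …, d_m}`: the minimal relaxation order. -/
def minOrder {n m : ℕ} (f : NCPoly n) (g : Fin m → NCPoly n) : ℕ :=
  max (ceilHalf (ncDeg f)) (Finset.univ.sup fun j : Fin m => ceilHalf (ncDeg (g j)))

/-- `A = supp(f) ∪ ⋃_j supp(g_j)`. -/
def Asupp {n m : ℕ} (f : NCPoly n) (g : Fin m → NCPoly n) : Set (Word n) :=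
  (↑f.support : Set (Word n)) ∪ ⋃ j : Fin m, (↑(g j).support : Set (Word n))

/-- The tsp graph `G_d̂^tsp` associated with `f` and `S = {g_1,…,g_m}`:
nodes `W_d̂`, and `u ≠ v` joined whenever `u⋆v ∈ A ∪ W_d̂²`. -/
def tspC {n m : ℕ} (f : NCPoly n) (g : Fin m → NCPoly n) (dh : ℕ) : SimpleGraph (Word n) :=
  SimpleGraph.fromRel fun u v =>
    u ∈ Wd n dh ∧ v ∈ Wd n dh ∧ wstar u ++ v ∈ Asupp f g ∪ Bsq (Wd n dh)

/-- The term-sparsity graph sequence `(G_{d̂,j}^{(k)})` for constrained eigenvalue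
optimization: alternate support extension and chordal extension. -/
def GseqC {n m : ℕ} (E : ChordalExt n) (f : NCPoly n) (g : Fin m → NCPoly n) (dh : ℕ) :
    ℕ → Fin (m + 1) → SimpleGraph (Word n)
  | 0 => Fin.cases (tspC f g dh) fun _ => (⊥ : SimpleGraph (Word n))
  | k + 1 => fun j =>
      E.ce (Wd n (dh - dAug g j)) <| SimpleGraph.fromRel fun u v =>
        u ∈ Wd n (dh - dAug g j) ∧ v ∈ Wd n (dh - dAug g j) ∧
          ∃ w ∈ (gAug g j).support,
            wstar u ++ w ++ v ∈
              (⋃ j' : Fin (m + 1), gsuppP (gAug g j') (GseqC E f g dh k j')) ∪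
                Bsq (Wd n dh)

/-- The same sequence built with the maximal chordal extension. -/
def GseqCMax {n m : ℕ} (f : NCPoly n) (g : Fin m → NCPoly n) (dh : ℕ) :
    ℕ → Fin (m + 1) → SimpleGraph (Word n)
  | 0 => Fin.cases (tspC f g dh) fun _ => (⊥ : SimpleGraph (Word n))
  | k + 1 => fun j =>
      maxCE <| SimpleGraph.fromRel fun u v =>
        u ∈ Wd n (dh - dAug g j) ∧ v ∈ Wd n (dh - dAug g j) ∧
          ∃ w ∈ (gAug g j).support,
            wstar u ++ w ++ v ∈
              (⋃ j' : Fin (m + 1), gsuppP (gAug g j') (GseqCMax f g dh k j')) ∪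
                Bsq (Wd n dh)

/-- The optimal value `λ_{d̂,k}^{ts}(f,S)` of the sparse moment relaxation `(EQ_{d̂,k}^{ts})`
associated to the family of graphs `GG`. -/
def eqTsValG {n m : ℕ} (f : NCPoly n) (g : Fin m → NCPoly n) (dh : ℕ)
    (GG : Fin (m + 1) → SimpleGraph (Word n)) : ℝ :=
  sInf {r | ∃ y : Word n → ℝ, r = Ly y f ∧ y [] = 1 ∧
    ∀ j : Fin (m + 1),
      Completable (Wd n (dh - dAug g j)) (GG j)
        (locMat (Wd n (dh - dAug g j)) (gAug g j) y)}

/-- The optimal value `λ_{d̂}(f,S)` of the dense moment relaxation `(EQ_{d̂})`. -/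
def eqDenseVal {n m : ℕ} (f : NCPoly n) (g : Fin m → NCPoly n) (dh : ℕ) : ℝ :=
  sInf {r | ∃ y : Word n → ℝ, r = Ly y f ∧ y [] = 1 ∧
    ∀ j : Fin (m + 1), (locMat (Wd n (dh - dAug g j)) (gAug g j) y).PosSemidef}

/-- The optimal value of the dual sparse SOHS relaxation `(EQ_{d̂,k}^{ts})*`. -/
def eqTsDualValG {n m : ℕ} (f : NCPoly n) (g : Fin m → NCPoly n) (dh : ℕ)
    (GG : Fin (m + 1) → SimpleGraph (Word n)) : ℝ :=
  sSup {l | ∃ Q : ∀ j : Fin (m + 1),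
      Matrix ↥(Wd n (dh - dAug g j)) ↥(Wd n (dh - dAug g j)) ℝ,
    (∀ j, (Q j).PosSemidef) ∧
    (∀ j, SparsityPattern (Wd n (dh - dAug g j)) (GG j) (Q j)) ∧
    ∀ w ∈ (⋃ j : Fin (m + 1), gsuppP (gAug g j) (GG j)) ∪ Bsq (Wd n dh),
      (∑ j : Fin (m + 1), pairingD (Wd n (dh - dAug g j)) (gAug g j) (Q j) w)
        + (if w = ([] : Word n) then l else 0) = f w}

/-- The ball polynomial `R² − Σ_i X_i²`. -/
def ballPoly (n : ℕ) (R : ℝ) : NCPoly n :=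
  Finsupp.single [] (R ^ 2) - ∑ i : Fin n, Finsupp.single [i, i] (1 : ℝ)

/-- A point of the operator semialgebraic set `D_S^∞`: a tuple of bounded self-adjoint
operators on a real Hilbert space making all `g_j(A)` positive semidefinite. -/
structure OpFeasPoint (n m : ℕ) (g : Fin m → NCPoly n) where
  H : Type
  [grp : NormedAddCommGroup H]
  [ip : InnerProductSpace ℝ H]
  [cpl : CompleteSpace H]
  A : Fin n → H →L[ℝ] H
  selfAdj : ∀ i, IsSelfAdjoint (A i)
  posOp : ∀ (j : Fin m) (x : H), 0 ≤ (inner ℝ ((evalNC (g j) A) x) x : ℝ)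

/-- Feasibility of the semialgebraic set `D_S` (on tuples of symmetric matrices). -/
def MatFeasible {n m : ℕ} (g : Fin m → NCPoly n) : Prop :=
  ∃ (r : ℕ) (A : Fin n → Matrix (Fin (r + 1)) (Fin (r + 1)) ℝ),
    (∀ i, (A i).IsSymm) ∧ ∀ j, (evalNC (g j) A).PosSemidef

/-! ### Combined correlative-term sparsity (eigenvalue optimization) -/

/-- Words of degree ≤ d in the variables `X(I_l)`. -/
def WdL (n d : ℕ) (Il : Finset (Fin n)) : Finset (Word n) :=
  (Wd n d).filter fun w => ∀ i ∈ w, i ∈ Il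

/-- Index set for the blocks of the combined correlative-term sparsity relaxations:
`Sum.inl l` indexes the moment block of the clique `I_l` (i.e. `j = 0`), and `Sum.inr j`
indexes the localizing block of the constraint `g_j` (belonging to the clique `I_{l(j)}`). -/
abbrev CIdx (p m : ℕ) := Fin p ⊕ Fin m

/-- The node set (monomial basis) of each block. -/
def csNode {n m p : ℕ} (g : Fin m → NCPoly n) (I : Fin p → Finset (Fin n))
    (asg : Fin m → Fin p) (dh : ℕ) : CIdx p m → Finset (Word n)
  | .inl l => WdL n dh (I l)
  | .inr j => WdL n (dh - ceilHalf (ncDeg (g j))) (I (asg j))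

/-- The polynomial attached to each block (`1` for moment blocks, `g_j` for localizing
blocks). -/
def csPoly {n m p : ℕ} (g : Fin m → NCPoly n) : CIdx p m → NCPoly n
  | .inl _ => ncOne
  | .inr j => g j

/-- `A_l = {w ∈ A : var(w) ⊆ X(I_l)}`. -/
def AsuppL {n m : ℕ} (f : NCPoly n) (g : Fin m → NCPoly n) (Il : Finset (Fin n)) :
    Set (Word n) := {w | w ∈ Asupp f g ∧ ∀ i ∈ w, i ∈ Il}

/-- The per-clique tsp graph `G_{d̂,l}^{tsp}` with nodes `W_{d̂,l}` associated with `A_l`. -/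
def tspCS {n m p : ℕ} (f : NCPoly n) (g : Fin m → NCPoly n) (I : Fin p → Finset (Fin n))
    (dh : ℕ) (l : Fin p) : SimpleGraph (Word n) :=
  SimpleGraph.fromRel fun u v =>
    u ∈ WdL n dh (I l) ∧ v ∈ WdL n dh (I l) ∧
      wstar u ++ v ∈ AsuppL f g (I l) ∪ Bsq (WdL n dh (I l))

/-- The combined correlative-term sparsity graph sequence `(G_{d̂,l,j}^{(k)})`. -/
def GseqCS {n m p : ℕ} (E : ChordalExt n) (f : NCPoly n) (g : Fin m → NCPoly n)
    (I : Fin p → Finset (Fin n)) (asg : Fin m → Fin p) (dh : ℕ) :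
    ℕ → CIdx p m → SimpleGraph (Word n)
  | 0 => Sum.elim (fun l => tspCS f g I dh l) (fun _ => (⊥ : SimpleGraph (Word n)))
  | k + 1 => fun t =>
      E.ce (csNode g I asg dh t) <| SimpleGraph.fromRel fun u v =>
        u ∈ csNode g I asg dh t ∧ v ∈ csNode g I asg dh t ∧
          ∃ w ∈ (csPoly g t).support,
            wstar u ++ w ++ v ∈
              (⋃ t' : CIdx p m, gsuppP (csPoly g t') (GseqCS E f g I asg dh k t')) ∪
                Bsq (Wd n dh)

/-- The same sequence built with the maximal chordal extension. -/
def GseqCSMax {n m p : ℕ} (f : NCPoly n) (g : Fin m → NCPoly n)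
    (I : Fin p → Finset (Fin n)) (asg : Fin m → Fin p) (dh : ℕ) :
    ℕ → CIdx p m → SimpleGraph (Word n)
  | 0 => Sum.elim (fun l => tspCS f g I dh l) (fun _ => (⊥ : SimpleGraph (Word n)))
  | k + 1 => fun t =>
      maxCE <| SimpleGraph.fromRel fun u v =>
        u ∈ csNode g I asg dh t ∧ v ∈ csNode g I asg dh t ∧
          ∃ w ∈ (csPoly g t).support,
            wstar u ++ w ++ v ∈
              (⋃ t' : CIdx p m, gsuppP (csPoly g t') (GseqCSMax f g I asg dh k t')) ∪
                Bsq (Wd n dh)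

/-- The optimal value `λ_{d̂,k}^{cs-ts}(f,S)` of `(EQ_{d̂,k}^{cs-ts})` associated to the family
of graphs `GG`. -/
def csTsValG {n m p : ℕ} (f : NCPoly n) (g : Fin m → NCPoly n) (I : Fin p → Finset (Fin n))
    (asg : Fin m → Fin p) (dh : ℕ) (GG : CIdx p m → SimpleGraph (Word n)) : ℝ :=
  sInf {r | ∃ y : Word n → ℝ, r = Ly y f ∧ y [] = 1 ∧
    ∀ t : CIdx p m,
      Completable (csNode g I asg dh t) (GG t) (locMat (csNode g I asg dh t) (csPoly g t) y)}

/-- The optimal value `λ_{d̂}^{cs}(f,S)` of the correlative-sparsity relaxation `(EQ_{d̂}^{cs})`. -/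
def csVal {n m p : ℕ} (f : NCPoly n) (g : Fin m → NCPoly n) (I : Fin p → Finset (Fin n))
    (asg : Fin m → Fin p) (dh : ℕ) : ℝ :=
  sInf {r | ∃ y : Word n → ℝ, r = Ly y f ∧ y [] = 1 ∧
    ∀ t : CIdx p m, (locMat (csNode g I asg dh t) (csPoly g t) y).PosSemidef}

/-! ### Trace optimization: cyclic equivalence -/

/-- Two words are cyclically equivalent iff one is a cyclic rotation of the other. -/
def cycEq {n : ℕ} (u v : Word n) : Prop := ∃ k, u = v.rotate k

/-- The (finite) cyclic equivalence class of a word. -/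
def rotClass {n : ℕ} (v : Word n) : Finset (Word n) :=
  (Finset.range (v.length + 1)).image fun k => v.rotate k

/-- The cyclic degree `cdeg(f) = deg([f])` of an nc polynomial. -/
def ncCdeg {n : ℕ} (f : NCPoly n) : ℕ :=
  (f.support.filter fun w => (∑ w' ∈ rotClass w, f w') ≠ 0).sup List.length

/-- `d = max{⌈cdeg f/2⌉, d_1, …, d_m}`: the minimal relaxation order for trace optimization. -/
def minOrderT {n m : ℕ} (f : NCPoly n) (g : Fin m → NCPoly n) : ℕ :=
  max (ceilHalf (ncCdeg f)) (Finset.univ.sup fun j : Fin m => ceilHalf (ncDeg (g j)))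

/-- The cyclic tsp graph `H_d̂^tsp`: nodes `W_d̂`, and `u ≠ v` joined whenever
`[u⋆v] ∈ [A ∪ W_d̂²]`. -/
def tspT {n m : ℕ} (f : NCPoly n) (g : Fin m → NCPoly n) (dh : ℕ) : SimpleGraph (Word n) :=
  SimpleGraph.fromRel fun u v =>
    u ∈ Wd n dh ∧ v ∈ Wd n dh ∧
      ∃ s ∈ Asupp f g ∪ Bsq (Wd n dh), cycEq (wstar u ++ v) s

/-- The cyclic term-sparsity graph sequence `(H_{d̂,j}^{(k)})`: alternate cyclic support
extension and chordal extension. -/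
def GseqT {n m : ℕ} (E : ChordalExt n) (f : NCPoly n) (g : Fin m → NCPoly n) (dh : ℕ) :
    ℕ → Fin (m + 1) → SimpleGraph (Word n)
  | 0 => Fin.cases (tspT f g dh) fun _ => (⊥ : SimpleGraph (Word n))
  | k + 1 => fun j =>
      E.ce (Wd n (dh - dAug g j)) <| SimpleGraph.fromRel fun u v =>
        u ∈ Wd n (dh - dAug g j) ∧ v ∈ Wd n (dh - dAug g j) ∧
          ∃ w ∈ (gAug g j).support,
            ∃ s ∈ (⋃ j' : Fin (m + 1), gsuppP (gAug g j') (GseqT E f g dh k j')) ∪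
                Bsq (Wd n dh),
              cycEq (wstar u ++ w ++ v) s

/-- The same sequence built with the maximal chordal extension. -/
def GseqTMax {n m : ℕ} (f : NCPoly n) (g : Fin m → NCPoly n) (dh : ℕ) :
    ℕ → Fin (m + 1) → SimpleGraph (Word n)
  | 0 => Fin.cases (tspT f g dh) fun _ => (⊥ : SimpleGraph (Word n))
  | k + 1 => fun j =>
      maxCE <| SimpleGraph.fromRel fun u v =>
        u ∈ Wd n (dh - dAug g j) ∧ v ∈ Wd n (dh - dAug g j) ∧
          ∃ w ∈ (gAug g j).support,
            ∃ s ∈ (⋃ j' : Fin (m + 1), gsuppP (gAug g j') (GseqTMax f g dh k j')) ∪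
                Bsq (Wd n dh),
              cycEq (wstar u ++ w ++ v) s

/-- The entry of the Hadamard product `B_H ∘ M(y)` at `(u,v)`. -/
def hadEntry {n : ℕ} (H : SimpleGraph (Word n)) (y : Word n → ℝ) (u v : Word n) : ℝ :=
  if u = v ∨ H.Adj u v then y (wstar u ++ v) else 0

/-- The tracial constraint `[B_H ∘ M(y)]_{uv} = [B_H ∘ M(y)]_{wz}` for all `u⋆v ∼cyc w⋆z`,
on the node set `W`. -/
def CycConstraint {n : ℕ} (W : Finset (Word n)) (H : SimpleGraph (Word n))
    (y : Word n → ℝ) : Prop :=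
  ∀ u v w z : Word n, u ∈ W → v ∈ W → w ∈ W → z ∈ W →
    cycEq (wstar u ++ v) (wstar w ++ z) → hadEntry H y u v = hadEntry H y w z

/-- The optimal value `μ_{d̂,k}^{ts}(f,S)` of the sparse tracial moment relaxation
`(TQ_{d̂,k}^{ts})` associated to the family of graphs `GG`. -/
def tqTsValG {n m : ℕ} (f : NCPoly n) (g : Fin m → NCPoly n) (dh : ℕ)
    (GG : Fin (m + 1) → SimpleGraph (Word n)) : ℝ :=
  sInf {r | ∃ y : Word n → ℝ, r = Ly y f ∧ y [] = 1 ∧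
    (∀ j : Fin (m + 1),
      Completable (Wd n (dh - dAug g j)) (GG j)
        (locMat (Wd n (dh - dAug g j)) (gAug g j) y)) ∧
    CycConstraint (Wd n dh) (GG 0) y}

/-- The optimal value `μ_{d̂}(f,S)` of the dense tracial moment relaxation `(TQ_{d̂})`. -/
def tqDenseVal {n m : ℕ} (f : NCPoly n) (g : Fin m → NCPoly n) (dh : ℕ) : ℝ :=
  sInf {r | ∃ y : Word n → ℝ, r = Ly y f ∧ y [] = 1 ∧
    (∀ j : Fin (m + 1), (locMat (Wd n (dh - dAug g j)) (gAug g j) y).PosSemidef) ∧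
    ∀ u v w z : Word n, u ∈ Wd n dh → v ∈ Wd n dh → w ∈ Wd n dh → z ∈ Wd n dh →
      cycEq (wstar u ++ v) (wstar w ++ z) → y (wstar u ++ v) = y (wstar w ++ z)}

/-- The optimal value of the dual sparse tracial SOHS relaxation `(TQ_{d̂,k}^{ts})*`. -/
def tqTsDualValG {n m : ℕ} (f : NCPoly n) (g : Fin m → NCPoly n) (dh : ℕ)
    (GG : Fin (m + 1) → SimpleGraph (Word n)) : ℝ :=
  sSup {l | ∃ Q : ∀ j : Fin (m + 1),
      Matrix ↥(Wd n (dh - dAug g j)) ↥(Wd n (dh - dAug g j)) ℝ,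
    (∀ j, (Q j).PosSemidef) ∧
    (∀ j, SparsityPattern (Wd n (dh - dAug g j)) (GG j) (Q j)) ∧
    ∀ v : Word n,
      (∃ s ∈ (⋃ j : Fin (m + 1), gsuppP (gAug g j) (GG j)) ∪ Bsq (Wd n dh), cycEq v s) →
        (∑ w ∈ rotClass v,
          ((∑ j : Fin (m + 1), pairingD (Wd n (dh - dAug g j)) (gAug g j) (Q j) w)
            + (if w = ([] : Word n) then l else 0)))
          = ∑ w ∈ rotClass v, f w}

/-! ### Combined correlative-term sparsity (trace optimization) -/

/-- The per-clique cyclic tsp graph `H_{d̂,l}^{tsp}`. -/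
def tspTCS {n m p : ℕ} (f : NCPoly n) (g : Fin m → NCPoly n) (I : Fin p → Finset (Fin n))
    (dh : ℕ) (l : Fin p) : SimpleGraph (Word n) :=
  SimpleGraph.fromRel fun u v =>
    u ∈ WdL n dh (I l) ∧ v ∈ WdL n dh (I l) ∧
      ∃ s ∈ AsuppL f g (I l) ∪ Bsq (WdL n dh (I l)), cycEq (wstar u ++ v) s

/-- The combined correlative-term sparsity cyclic graph sequence `(H_{d̂,l,j}^{(k)})`. -/
def GseqTCS {n m p : ℕ} (E : ChordalExt n) (f : NCPoly n) (g : Fin m → NCPoly n)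
    (I : Fin p → Finset (Fin n)) (asg : Fin m → Fin p) (dh : ℕ) :
    ℕ → CIdx p m → SimpleGraph (Word n)
  | 0 => Sum.elim (fun l => tspTCS f g I dh l) (fun _ => (⊥ : SimpleGraph (Word n)))
  | k + 1 => fun t =>
      E.ce (csNode g I asg dh t) <| SimpleGraph.fromRel fun u v =>
        u ∈ csNode g I asg dh t ∧ v ∈ csNode g I asg dh t ∧
          ∃ w ∈ (csPoly g t).support,
            ∃ s ∈ (⋃ t' : CIdx p m, gsuppP (csPoly g t') (GseqTCS E f g I asg dh k t')) ∪
                Bsq (Wd n dh),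
              cycEq (wstar u ++ w ++ v) s

/-- The same sequence built with the maximal chordal extension. -/
def GseqTCSMax {n m p : ℕ} (f : NCPoly n) (g : Fin m → NCPoly n)
    (I : Fin p → Finset (Fin n)) (asg : Fin m → Fin p) (dh : ℕ) :
    ℕ → CIdx p m → SimpleGraph (Word n)
  | 0 => Sum.elim (fun l => tspTCS f g I dh l) (fun _ => (⊥ : SimpleGraph (Word n)))
  | k + 1 => fun t =>
      maxCE <| SimpleGraph.fromRel fun u v =>
        u ∈ csNode g I asg dh t ∧ v ∈ csNode g I asg dh t ∧
          ∃ w ∈ (csPoly g t).support,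
            ∃ s ∈ (⋃ t' : CIdx p m, gsuppP (csPoly g t') (GseqTCSMax f g I asg dh k t')) ∪
                Bsq (Wd n dh),
              cycEq (wstar u ++ w ++ v) s

/-- The optimal value `μ_{d̂,k}^{cs-ts}(f,S)` of `(TQ_{d̂,k}^{cs-ts})` associated to the family
of graphs `GG`. -/
def tqCsTsValG {n m p : ℕ} (f : NCPoly n) (g : Fin m → NCPoly n)
    (I : Fin p → Finset (Fin n)) (asg : Fin m → Fin p) (dh : ℕ)
    (GG : CIdx p m → SimpleGraph (Word n)) : ℝ :=
  sInf {r | ∃ y : Word n → ℝ, r = Ly y f ∧ y [] = 1 ∧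
    (∀ t : CIdx p m,
      Completable (csNode g I asg dh t) (GG t)
        (locMat (csNode g I asg dh t) (csPoly g t) y)) ∧
    ∀ l : Fin p, CycConstraint (WdL n dh (I l)) (GG (Sum.inl l)) y}

/-- The optimal value `μ_{d̂}^{cs}(f,S)` of the correlative-sparsity tracial relaxation. -/
def tqCsVal {n m p : ℕ} (f : NCPoly n) (g : Fin m → NCPoly n) (I : Fin p → Finset (Fin n))
    (asg : Fin m → Fin p) (dh : ℕ) : ℝ :=
  sInf {r | ∃ y : Word n → ℝ, r = Ly y f ∧ y [] = 1 ∧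
    (∀ t : CIdx p m, (locMat (csNode g I asg dh t) (csPoly g t) y).PosSemidef) ∧
    ∀ l : Fin p, ∀ u v w z : Word n, u ∈ WdL n dh (I l) → v ∈ WdL n dh (I l) →
      w ∈ WdL n dh (I l) → z ∈ WdL n dh (I l) →
        cycEq (wstar u ++ v) (wstar w ++ z) → y (wstar u ++ v) = y (wstar w ++ z)}

/-- `supp(G) ∪ W²` as a finite word set, for a graph `G` with nodes in `W`. -/
def suppUnionSq {n : ℕ} (W : Finset (Word n)) (G : SimpleGraph (Word n)) :
    Finset (Word n) :=
  ((W ×ˢ W).filter fun p => G.Adj p.1 p.2 ∨ p.1 = p.2).image fun p => wstar p.1 ++ p.2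

/-!
A point `y` feasible for `(EP^1)` comes with a PSD completion of its moment matrix, i.e. Gram
vectors `z_u` (`u ∈ {1, X_1, …, X_n}`) with `⟨z_u, z_u'⟩ = y_{u⋆u'}` on the diagonal and on the
edges of `G_1`. With the unit vector `v = z_1` and the symmetric matrices
`A_i = z_i vᵀ + v z_iᵀ - ⟨z_i, v⟩ v vᵀ`, which satisfy `A_i v = z_i`, every word `w = u⋆u'` of
degree at most two has `⟨w(A) v, v⟩ = ⟨z_u, z_u'⟩`. Each word of `supp f` is of this form with
`{u, u'}` a diagonal entry or an edge of `G_0 ⊆ G_1`, so `L_y(f) = ⟨f(A) v, v⟩`. Conversely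
`w ↦ ⟨w(A) v, v⟩` has a PSD moment matrix. For the Gram matrix statement, an off-diagonal entry
`Q_{u,u'}` is, up to symmetry, the only contribution to the coefficient of `u⋆u'`, so it vanishes
on the non-edges of `G_0`.
-/

open Matrix

section MatrixMoments

variable {n : ℕ} {ι : Type*} [Fintype ι] [DecidableEq ι]

def matMoments (A : Fin n → Matrix ι ι ℝ) (v : ι → ℝ) (w : Word n) : ℝ :=
  v ⬝ᵥ (w.map A).prod *ᵥ v

lemma dotProduct_evalNC_mulVec (f : NCPoly n) (A : Fin n → Matrix ι ι ℝ) (v : ι → ℝ) :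
    v ⬝ᵥ evalNC f A *ᵥ v = Ly (matMoments A v) f := by
  simp only [evalNC, Ly, matMoments, Finsupp.sum, sum_mulVec, dotProduct_sum, smul_mulVec,
    dotProduct_smul, smul_eq_mul]

lemma prod_map_wstar_of_isSymm {A : Fin n → Matrix ι ι ℝ} (hA : ∀ i, (A i).IsSymm)
    (u : Word n) : ((wstar u).map A).prod = ((u.map A).prod)ᵀ := by
  rw [transpose_list_prod, List.map_map, wstar, List.map_reverse]
  congr 2
  exact List.map_congr_left fun i _ => (hA i).eq.symm

lemma matMoments_wstar_append {A : Fin n → Matrix ι ι ℝ} (hA : ∀ i, (A i).IsSymm)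
    (v : ι → ℝ) (u u' : Word n) :
    matMoments A v (wstar u ++ u') = (u.map A).prod *ᵥ v ⬝ᵥ (u'.map A).prod *ᵥ v := by
  rw [matMoments, List.map_append, List.prod_append, prod_map_wstar_of_isSymm hA,
    ← mulVec_mulVec, dotProduct_mulVec, vecMul_transpose]

lemma posSemidef_momMat_matMoments {A : Fin n → Matrix ι ι ℝ} (hA : ∀ i, (A i).IsSymm)
    (v : ι → ℝ) (B : Finset (Word n)) : (momMat B (matMoments A v)).PosSemidef := by
  let Z : Matrix ι B ℝ := of fun k u => ((u.1.map A).prod *ᵥ v) k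
  have hgram : momMat B (matMoments A v) = Zᴴ * Z := by
    ext u u'
    simp [Z, momMat, matMoments_wstar_append hA, mul_apply, dotProduct]
  rw [hgram]
  exact posSemidef_conjTranspose_mul_self Z

end MatrixMoments

section SymmSending

variable {ι : Type*} [Fintype ι]

def symmSending (v z : ι → ℝ) : Matrix ι ι ℝ :=
  vecMulVec z v + vecMulVec v z - (z ⬝ᵥ v) • vecMulVec v v

lemma symmSending_isSymm (v z : ι → ℝ) : (symmSending v z).IsSymm := by
  simp only [IsSymm, symmSending, transpose_sub, transpose_add, transpose_smul,
    transpose_vecMulVec]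
  abel

lemma symmSending_mulVec {v : ι → ℝ} (hv : v ⬝ᵥ v = 1) (z : ι → ℝ) :
    symmSending v z *ᵥ v = z := by
  simp only [symmSending, sub_mulVec, add_mulVec, smul_mulVec, vecMulVec_mulVec, hv]
  ext k
  simp

end SymmSending

lemma Matrix.PosSemidef.exists_gram_vectors {ι : Type*} [Fintype ι] [Nonempty ι]
    {P : Matrix ι ι ℝ} (hP : P.PosSemidef) :
    ∃ (r : ℕ) (z : ι → Fin (r + 1) → ℝ), ∀ a b, z a ⬝ᵥ z b = P a b := by
  open scoped MatrixOrder in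
  obtain ⟨C, rfl⟩ := CStarAlgebra.nonneg_iff_eq_star_mul_self.mp hP.nonneg
  obtain ⟨r, hr⟩ := Nat.exists_eq_add_one.mpr (Fintype.card_pos (α := ι))
  let e : ι ≃ Fin (r + 1) := (Fintype.equivFin ι).trans (finCongr hr)
  refine ⟨r, fun a k => C (e.symm k) a, fun a b => ?_⟩
  simp only [star_eq_conjTranspose, mul_apply, conjTranspose_apply, star_trivial, dotProduct]
  exact Fintype.sum_equiv e.symm _ _ fun _ => rfl

section TermSparsityGraphs

variable {n : ℕ} (B : Finset (Word n))

lemma tspU_adj_of_mem_support {f : NCPoly n} {u u' : Word n} (hu : u ∈ B) (hu' : u' ∈ B)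
    (hne : u ≠ u') (hw : wstar u ++ u' ∈ f.support) : (tspU B f).Adj u u' :=
  (SimpleGraph.fromRel_adj _ _ _).mpr ⟨hne, Or.inl ⟨hu, hu', Or.inl hw⟩⟩

lemma edgesIn_tspU (f : NCPoly n) : EdgesIn B (tspU B f) := by
  rintro u u' ⟨-, ⟨hu, hu', -⟩ | ⟨hu', hu, -⟩⟩ <;> exact ⟨hu, hu'⟩

lemma le_SE_of_edgesIn {G : SimpleGraph (Word n)} (hG : EdgesIn B G) : G ≤ SE B G :=
  fun u u' h => (SimpleGraph.fromRel_adj _ _ _).mpr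
    ⟨h.ne, Or.inl ⟨(hG u u' h).1, (hG u u' h).2, Or.inl ⟨u, u', h, rfl⟩⟩⟩

lemma tspU_le_GseqU_one (E : ChordalExt n) (f : NCPoly n) : tspU B f ≤ GseqU E B f 1 :=
  (le_SE_of_edgesIn B (edgesIn_tspU B f)).trans (E.le_ce _ _)

lemma completable_of_posSemidef (G : SimpleGraph (Word n)) {M : Matrix B B ℝ}
    (hM : M.PosSemidef) : Completable B G M :=
  ⟨M, hM, fun _ _ _ => rfl⟩

lemma pairingD_ncOne (Q : Matrix B B ℝ) (w : Word n) :
    pairingD B ncOne Q w = ∑ u : B, ∑ u' : B, if wstar u.1 ++ u'.1 = w then Q u u' else 0 := by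
  refine Finset.sum_congr rfl fun u _ => Finset.sum_congr rfl fun u' _ => ?_
  rw [ncOne, Finsupp.sum_single_index (by simp), List.append_nil]
  split_ifs <;> simp

end TermSparsityGraphs

section QuadBasis

variable {n : ℕ}

lemma mem_quadBasis {w : Word n} : w ∈ quadBasis n ↔ w = [] ∨ ∃ i, w = [i] := by
  simp [quadBasis, eq_comm]

def quadBasisEquiv (n : ℕ) : Option (Fin n) ≃ quadBasis n where
  toFun
    | none => ⟨[], mem_quadBasis.mpr (Or.inl rfl)⟩
    | some i => ⟨[i], mem_quadBasis.mpr (Or.inr ⟨i, rfl⟩)⟩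
  invFun u := u.1.head?
  left_inv o := by cases o <;> rfl
  right_inv := by
    rintro ⟨w, hw⟩
    rcases mem_quadBasis.mp hw with rfl | ⟨i, rfl⟩ <;> rfl

instance : Nonempty (quadBasis n) := ⟨quadBasisEquiv n none⟩

@[simp] lemma quadBasisEquiv_none : (quadBasisEquiv n none : Word n) = [] := rfl

@[simp] lemma quadBasisEquiv_some (i : Fin n) : (quadBasisEquiv n (some i) : Word n) = [i] := rfl

lemma sum_quadBasis {M : Type*} [AddCommMonoid M] (F : quadBasis n → M) :
    ∑ u, F u = F (quadBasisEquiv n none) + ∑ i, F (quadBasisEquiv n (some i)) := by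
  rw [← Equiv.sum_comp (quadBasisEquiv n) F, Fintype.sum_option]

lemma pairingD_ncOne_single (Q : Matrix (quadBasis n) (quadBasis n) ℝ) (j : Fin n) :
    pairingD (quadBasis n) ncOne Q [j] =
      Q (quadBasisEquiv n none) (quadBasisEquiv n (some j)) +
        Q (quadBasisEquiv n (some j)) (quadBasisEquiv n none) := by
  rw [pairingD_ncOne]
  simp only [sum_quadBasis]
  simp [wstar, eq_comm]

lemma pairingD_ncOne_pair (Q : Matrix (quadBasis n) (quadBasis n) ℝ) (i j : Fin n) :
    pairingD (quadBasis n) ncOne Q [i, j] =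
      Q (quadBasisEquiv n (some i)) (quadBasisEquiv n (some j)) := by
  rw [pairingD_ncOne]
  simp only [sum_quadBasis]
  simp [wstar, ite_and]

lemma exists_quadBasis_factor {w : Word n} (hw : w.length ≤ 2) :
    ∃ u ∈ quadBasis n, ∃ u' ∈ quadBasis n, w = wstar u ++ u' := by
  have hnil : ([] : Word n) ∈ quadBasis n := mem_quadBasis.mpr (Or.inl rfl)
  have hsingle (i : Fin n) : [i] ∈ quadBasis n := mem_quadBasis.mpr (Or.inr ⟨i, rfl⟩)
  match w, hw with
  | [], _ => exact ⟨[], hnil, [], hnil, rfl⟩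
  | [i], _ => exact ⟨[], hnil, [i], hsingle i, rfl⟩
  | [i, j], _ => exact ⟨[i], hsingle i, [j], hsingle j, rfl⟩

end QuadBasis

section QuadraticPolynomials

variable {n : ℕ}

lemma sparsityPattern_tspU_of_gram {f : NCPoly n} {Q : Matrix (quadBasis n) (quadBasis n) ℝ}
    (hQ : Q.IsHermitian) (hf : ∀ w, f w = pairingD (quadBasis n) ncOne Q w) :
    SparsityPattern (quadBasis n) (tspU (quadBasis n) f) Q := by
  intro u u' h
  obtain ⟨hne, hnadj⟩ := not_or.mp h
  have hzero : pairingD (quadBasis n) ncOne Q (wstar u.1 ++ u'.1) = 0 := by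
    rw [← hf, ← Finsupp.notMem_support_iff]
    exact fun hw => hnadj (tspU_adj_of_mem_support _ u.2 u'.2 (Subtype.coe_ne_coe.mpr hne) hw)
  have hQsymm (a b) : Q b a = Q a b := by simpa using hQ.apply a b
  obtain ⟨o, rfl⟩ := (quadBasisEquiv n).surjective u
  obtain ⟨o', rfl⟩ := (quadBasisEquiv n).surjective u'
  rcases o with _ | i <;> rcases o' with _ | j
  · exact absurd rfl hne
  · simp only [quadBasisEquiv_none, quadBasisEquiv_some, wstar, List.reverse_nil,
      List.nil_append, pairingD_ncOne_single] at hzero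
    linarith [hQsymm (quadBasisEquiv n none) (quadBasisEquiv n (some j))]
  · simp only [quadBasisEquiv_none, quadBasisEquiv_some, wstar, List.reverse_singleton,
      List.append_nil, pairingD_ncOne_single] at hzero
    linarith [hQsymm (quadBasisEquiv n none) (quadBasisEquiv n (some i))]
  · simpa [wstar, pairingD_ncOne_pair] using hzero

lemma exists_matrices_of_completable {f : NCPoly n} (hdeg : ncDeg f ≤ 2)
    {G : SimpleGraph (Word n)} (hG : tspU (quadBasis n) f ≤ G) {y : Word n → ℝ}
    (hy : y [] = 1) (hC : Completable (quadBasis n) G (momMat (quadBasis n) y)) :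
    ∃ (r : ℕ) (A : Fin n → Matrix (Fin (r + 1)) (Fin (r + 1)) ℝ) (v : Fin (r + 1) → ℝ),
      (∀ i, (A i).IsSymm) ∧ ∑ k, v k ^ 2 = 1 ∧ Ly y f = v ⬝ᵥ evalNC f A *ᵥ v := by
  obtain ⟨P, hP, hPM⟩ := hC
  obtain ⟨r, z, hz⟩ := hP.exists_gram_vectors
  set v := z (quadBasisEquiv n none)
  have hv : v ⬝ᵥ v = 1 := by
    rw [hz, hPM _ _ (Or.inl rfl)]
    simpa [momMat, wstar] using hy
  set A : Fin n → Matrix (Fin (r + 1)) (Fin (r + 1)) ℝ :=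
    fun i => symmSending v (z (quadBasisEquiv n (some i)))
  have hA : ∀ i, (A i).IsSymm := fun i => symmSending_isSymm _ _
  have hAv : ∀ u : quadBasis n, (u.1.map A).prod *ᵥ v = z u := by
    intro u
    obtain ⟨_ | i, rfl⟩ := (quadBasisEquiv n).surjective u
    · simp [v]
    · simp [A, symmSending_mulVec hv]
  refine ⟨r, A, v, hA, by simpa [dotProduct, sq] using hv, ?_⟩
  rw [dotProduct_evalNC_mulVec]
  refine Finsupp.sum_congr fun w hw => congrArg _ ?_
  obtain ⟨u, hu, u', hu', rfl⟩ := exists_quadBasis_factor (hdeg.trans' (Finset.le_sup hw))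
  have hentry : (⟨u, hu⟩ : quadBasis n) = ⟨u', hu'⟩ ∨ G.Adj u u' := by
    by_cases huu' : u = u'
    · exact Or.inl (Subtype.ext huu')
    · exact Or.inr (hG (tspU_adj_of_mem_support _ hu hu' huu' hw))
  rw [matMoments_wstar_append hA, hAv ⟨u, hu⟩, hAv ⟨u', hu'⟩, hz, hPM _ _ hentry]
  rfl

end QuadraticPolynomials

theorem stmt3_general {n : ℕ} (f : NCPoly n) (hdeg : ncDeg f = 2)
    (E : ChordalExt n) :
    epVal (quadBasis n) (GseqU E (quadBasis n) f 1) f = lambdaMin f ∧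
    (∀ Q : Matrix ↥(quadBasis n) ↥(quadBasis n) ℝ, Q.PosSemidef →
      (∀ w, f w = pairingD (quadBasis n) ncOne Q w) →
      ∃ Q' : Matrix ↥(quadBasis n) ↥(quadBasis n) ℝ, Q'.PosSemidef ∧
        SparsityPattern (quadBasis n) (tspU (quadBasis n) f) Q' ∧
        ∀ w, f w = pairingD (quadBasis n) ncOne Q' w) := by
  refine ⟨?_, fun Q hQ hf => ⟨Q, hQ, sparsityPattern_tspU_of_gram hQ.isHermitian hf, hf⟩⟩
  unfold epVal lambdaMin
  congr 1
  ext c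
  constructor
  · rintro ⟨y, rfl, hy, hC⟩
    exact exists_matrices_of_completable hdeg.le (tspU_le_GseqU_one _ E f) hy hC
  · rintro ⟨r, A, v, hA, hv, rfl⟩
    refine ⟨matMoments A v, dotProduct_evalNC_mulVec f A v, ?_,
      completable_of_posSemidef _ _ (posSemidef_momMat_matMoments hA v _)⟩
    simpa [matMoments, dotProduct, sq] using hv

/-- for quadratic `f`, `λ_1(f) = λ_min(f)`; equivalently, if `f` admits a PSD
Gram matrix indexed by `B = {1, X_1, …, X_n}`, then it admits one in `𝕊₊^{n+1} ∩ 𝕊_{G_0}`. -/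
theorem stmt3 {n : ℕ} (f : NCPoly n) (hsym : IsSymNC f) (hdeg : ncDeg f = 2)
    (E : ChordalExt n) :
    epVal (quadBasis n) (GseqU E (quadBasis n) f 1) f = lambdaMin f ∧
    (∀ Q : Matrix ↥(quadBasis n) ↥(quadBasis n) ℝ, Q.PosSemidef →
      (∀ w, f w = pairingD (quadBasis n) ncOne Q w) →
      ∃ Q' : Matrix ↥(quadBasis n) ↥(quadBasis n) ℝ, Q'.PosSemidef ∧
        SparsityPattern (quadBasis n) (tspU (quadBasis n) f) Q' ∧
        ∀ w, f w = pairingD (quadBasis n) ncOne Q' w) :=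
  stmt3_general f hdeg E
end
end

section
/- Let f ∈ Sym ℝ⟨X⟩ and S = {g_1,…,g_m} ⊆ Sym ℝ⟨X⟩, fix d̂ ≥ d, and build the cyclic term-sparsity graph sequences (H_{d̂,j}^{(k)})_{k≥1} using the maximal chordal extension at each step. Then the sequence (μ_{d̂,k}^ts(f,S))_{k≥1} converges to the dense tracial optimum μ_{d̂}(f,S) in finitely many steps: if H_{d̂,j}^{(∘)} denote the stabilized graphs, the corresponding optimal value μ_{d̂,∘}(f,S) equals μ_{d̂}(f,S). -/
open scoped Classical BigOperators RealInnerProductSpace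

noncomputable section

/-!
The graph sequence is monotone and its edges stay inside the finite sets `W_{d̂-d_j}`, so it
stabilizes at some `k₀`. Let `Σ = [⋃_j supp_{g_j}(H_{d̂,j}^{(k₀)}) ∪ W_d̂²]`. By stability, `u ≠ v`
are adjacent in `H_{d̂,j}^{(k₀)}` as soon as some `u⋆wv` with `w ∈ supp(g_j)` lies in `Σ`, and the
edges of `H_{d̂,j}^{(k₀)}` are the pairs in a common connected component of that pre-graph.
Given a feasible `y` of the sparse relaxation, zero out `y` on the words of degree `≤ 2d̂` outside
`Σ`: every localizing matrix becomes a positive semidefinite completion masked to the connected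
components, which stays positive semidefinite by the Schur product theorem, and the tracial
constraints survive because `Σ` is closed under cyclic equivalence. The diagonal entries need
`u⋆wu ∈ Σ` for `w ∈ supp(g_j)`, which follows by induction on `u` once one knows that `Σ` is
closed under appending a square `e e` (within degree `2d̂`); that closure is again a consequence
of stability.
-/

section Words

variable {n : ℕ}

@[simp] lemma wstar_append (a b : Word n) : wstar (a ++ b) = wstar b ++ wstar a :=
  List.reverse_append

@[simp] lemma wstar_cons (e : Fin n) (a : Word n) : wstar (e :: a) = wstar a ++ [e] :=
  List.reverse_cons

@[simp] lemma wstar_nil : wstar ([] : Word n) = [] := rfl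

@[simp] lemma wstar_wstar (a : Word n) : wstar (wstar a) = a := List.reverse_reverse a

@[simp] lemma length_wstar (a : Word n) : (wstar a).length = a.length := List.length_reverse

lemma cycEq_iff_isRotated {u v : Word n} : cycEq u v ↔ v ~r u :=
  exists_congr fun _ => eq_comm

@[refl] lemma cycEq_refl (u : Word n) : cycEq u u := ⟨0, (List.rotate_zero u).symm⟩

@[symm] lemma cycEq.symm {u v : Word n} (h : cycEq u v) : cycEq v u :=
  cycEq_iff_isRotated.2 (cycEq_iff_isRotated.1 h).symm

@[trans] lemma cycEq.trans {u v w : Word n} (h₁ : cycEq u v) (h₂ : cycEq v w) : cycEq u w :=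
  cycEq_iff_isRotated.2 ((cycEq_iff_isRotated.1 h₂).trans (cycEq_iff_isRotated.1 h₁))

lemma cycEq_append_comm (a b : Word n) : cycEq (a ++ b) (b ++ a) :=
  ⟨b.length, (List.rotate_append_length_eq b a).symm⟩

lemma mem_wordsLen {w : Word n} {k : ℕ} : w ∈ wordsLen n k ↔ w.length = k := by
  induction k generalizing w with
  | zero => simp [wordsLen, List.length_eq_zero_iff]
  | succ k ih =>
    cases w <;> simp [wordsLen, ih]

@[simp] lemma mem_Wd {w : Word n} {d : ℕ} : w ∈ Wd n d ↔ w.length ≤ d := by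
  simp [Wd, mem_wordsLen]

lemma support_ncOne : (ncOne : NCPoly n).support = {[]} :=
  Finsupp.support_single _ one_ne_zero

end Words

section Masking

open Matrix

variable {N K : Type*} [Fintype N]

lemma Matrix.posSemidef_ite_apply_eq (κ : N → K) :
    (Matrix.of fun u v => if κ u = κ v then (1 : ℝ) else 0).PosSemidef := by
  classical
  let χ : Matrix N (Set.range κ) ℝ := fun u c => if κ u = c then 1 else 0
  convert posSemidef_self_mul_conjTranspose χ using 1
  ext u v
  rw [Matrix.mul_apply, Fintype.sum_eq_single ⟨κ u, u, rfl⟩]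
  · simp only [conjTranspose_apply, star_trivial]
    by_cases h : κ u = κ v <;> simp [χ, h, eq_comm]
  · rintro c hc
    have : κ u ≠ c := fun h => hc (Subtype.ext h.symm)
    simp [χ, this]

lemma Matrix.PosSemidef.ite_apply_eq {P : Matrix N N ℝ} (hP : P.PosSemidef) (κ : N → K) :
    (Matrix.of fun u v => if κ u = κ v then P u v else 0).PosSemidef := by
  have h : (Matrix.of fun u v => if κ u = κ v then P u v else 0) =
      P ⊙ Matrix.of fun u v => if κ u = κ v then 1 else 0 := by
    ext u v
    simp
  exact h ▸ hP.hadamard (Matrix.posSemidef_ite_apply_eq κ)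

end Masking

lemma Monotone.exists_forall_ge_eq_of_finite_range {α : Type*} [PartialOrder α] {a : ℕ → α}
    (ha : Monotone a) (hfin : (Set.range a).Finite) : ∃ k₀, ∀ k, k₀ ≤ k → a k = a k₀ := by
  obtain ⟨k₀, -, hmax⟩ :=
    Set.Finite.exists_maximalFor' a Set.univ (by rwa [Set.image_univ]) Set.univ_nonempty
  exact ⟨k₀, fun k hk => le_antisymm (hmax trivial (ha hk)) (ha hk)⟩

lemma SimpleGraph.fromRel_le_fromRel {V : Type*} {r s : V → V → Prop}
    (h : ∀ u v, r u v → s u v) : SimpleGraph.fromRel r ≤ SimpleGraph.fromRel s := by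
  intro u v huv
  rw [SimpleGraph.fromRel_adj] at huv ⊢
  exact ⟨huv.1, huv.2.imp (h u v) (h v u)⟩

lemma SimpleGraph.reachable_fromRel_of_rel {V : Type*} {r : V → V → Prop} {u v : V}
    (h : r u v) : (SimpleGraph.fromRel r).Reachable u v := by
  by_cases huv : u = v
  · exact huv ▸ SimpleGraph.Reachable.refl u
  · exact ((SimpleGraph.fromRel_adj r u v).2 ⟨huv, Or.inl h⟩).reachable

section MaxChordalExtension

variable {n : ℕ} {G H : SimpleGraph (Word n)}

lemma le_maxCE (G : SimpleGraph (Word n)) : G ≤ maxCE G :=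
  fun _ _ h => ⟨h.ne, h.reachable⟩

lemma maxCE_mono (h : G ≤ H) : maxCE G ≤ maxCE H :=
  fun _ _ hadj => ⟨hadj.1, hadj.2.mono h⟩

lemma eq_or_maxCE_adj_iff {u v : Word n} : u = v ∨ (maxCE G).Adj u v ↔ G.Reachable u v := by
  refine ⟨?_, fun h => or_iff_not_imp_left.2 fun huv => ⟨huv, h⟩⟩
  rintro (rfl | h)
  exacts [SimpleGraph.Reachable.refl _, h.2]

lemma edgesIn_maxCE {V : Finset (Word n)} (hG : EdgesIn V G) : EdgesIn V (maxCE G) := by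
  have hsrc : ∀ u v, (maxCE G).Adj u v → u ∈ V := by
    rintro u v ⟨huv, ⟨p⟩⟩
    cases p with
    | nil => exact absurd rfl huv
    | cons h _ => exact (hG _ _ h).1
  exact fun u v h => ⟨hsrc u v h, hsrc v u h.symm⟩

lemma finite_setOf_edgesIn (V : Finset (Word n)) :
    {G : SimpleGraph (Word n) | EdgesIn V G}.Finite := by
  let edges : SimpleGraph (Word n) → Set (Word n × Word n) := fun G => {p | G.Adj p.1 p.2}
  have hinj : Function.Injective edges := fun G H h => by
    ext u v
    exact Set.ext_iff.1 h (u, v)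
  refine ((V ×ˢ V : Finset _).finite_toSet.finite_subsets.preimage hinj.injOn).subset ?_
  intro G hG p hp
  simpa using hG p.1 p.2 hp

end MaxChordalExtension

section GraphSequence

variable {n m : ℕ} (f : NCPoly n) (g : Fin m → NCPoly n) (dh : ℕ)

/-- `[S]` in the paper's notation. -/
def cycClosure (S : Set (Word n)) : Set (Word n) := {w | ∃ s ∈ S, cycEq w s}

/-- `⋃_j supp_{g_j}(H_{d̂,j}^{(k)}) ∪ W_d̂²`. -/
def tsSupport (k : ℕ) : Set (Word n) :=
  (⋃ j : Fin (m + 1), gsuppP (gAug g j) (GseqTMax f g dh k j)) ∪ Bsq (Wd n dh)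

def tsPreGraph (k : ℕ) (j : Fin (m + 1)) : SimpleGraph (Word n) :=
  SimpleGraph.fromRel fun u v => u ∈ Wd n (dh - dAug g j) ∧ v ∈ Wd n (dh - dAug g j) ∧
    ∃ w ∈ (gAug g j).support, wstar u ++ w ++ v ∈ cycClosure (tsSupport f g dh k)

lemma GseqTMax_succ (k : ℕ) (j : Fin (m + 1)) :
    GseqTMax f g dh (k + 1) j = maxCE (tsPreGraph f g dh k j) := rfl

lemma GseqTMax_zero_succ (i : Fin m) : GseqTMax f g dh 0 i.succ = ⊥ := rfl

@[simp] lemma gAug_zero : gAug g 0 = ncOne := rfl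

@[simp] lemma dAug_zero : dAug g 0 = 0 := rfl

lemma nil_mem_support_gAug_zero : ([] : Word n) ∈ (gAug g 0).support := by
  simp [support_ncOne]

variable {f g dh}

lemma cycClosure_mono {S T : Set (Word n)} (h : S ⊆ T) : cycClosure S ⊆ cycClosure T :=
  fun _ ⟨s, hs, hw⟩ => ⟨s, h hs, hw⟩

lemma gsuppP_mono (p : NCPoly n) {G H : SimpleGraph (Word n)} (h : G ≤ H) :
    gsuppP p G ⊆ gsuppP p H := by
  rintro s ⟨u, v, w, hadj, hw, rfl⟩
  exact ⟨u, v, w, h hadj, hw, rfl⟩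

lemma tsPreGraph_mono {k k' : ℕ} (h : GseqTMax f g dh k ≤ GseqTMax f g dh k')
    (j : Fin (m + 1)) : tsPreGraph f g dh k j ≤ tsPreGraph f g dh k' j := by
  have hsupp : tsSupport f g dh k ⊆ tsSupport f g dh k' :=
    Set.union_subset_union_left _ <| Set.iUnion_mono fun j' => gsuppP_mono _ (h j')
  exact SimpleGraph.fromRel_le_fromRel fun u v ⟨hu, hv, w, hw, hs⟩ =>
    ⟨hu, hv, w, hw, cycClosure_mono hsupp hs⟩

lemma tspT_le_GseqTMax_one : tspT f g dh ≤ GseqTMax f g dh 1 0 := by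
  intro u v huv
  refine le_maxCE _ ((SimpleGraph.fromRel_adj _ u v).2 ⟨huv.ne, Or.inl ?_⟩)
  obtain ⟨-, ⟨hu, hv, -⟩ | ⟨hv, hu, -⟩⟩ := (SimpleGraph.fromRel_adj _ u v).1 huv <;>
  · refine ⟨by simpa using hu, by simpa using hv, [], nil_mem_support_gAug_zero g, ?_⟩
    exact ⟨_, Or.inl (Set.mem_iUnion.2 ⟨0, u, v, [], huv, nil_mem_support_gAug_zero g, rfl⟩),
      cycEq_refl _⟩

lemma GseqTMax_monotone : Monotone (GseqTMax f g dh) := by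
  refine monotone_nat_of_le_succ fun k => ?_
  induction k with
  | zero =>
    intro j
    cases j using Fin.cases with
    | zero => exact tspT_le_GseqTMax_one
    | succ i => exact bot_le
  | succ k ih => exact fun j => maxCE_mono (tsPreGraph_mono ih j)

lemma GseqTMax_edgesIn (k : ℕ) (j : Fin (m + 1)) :
    EdgesIn (Wd n (dh - dAug g j)) (GseqTMax f g dh k j) := by
  cases k with
  | zero =>
    cases j using Fin.cases with
    | zero =>
      intro u v h
      obtain ⟨-, ⟨hu, hv, -⟩ | ⟨hv, hu, -⟩⟩ := (SimpleGraph.fromRel_adj _ u v).1 h <;>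
        exact ⟨by simpa using hu, by simpa using hv⟩
    | succ i => exact fun u v h => absurd h (by simp [GseqTMax_zero_succ])
  | succ k =>
    refine edgesIn_maxCE fun u v h => ?_
    obtain ⟨-, ⟨hu, hv, -⟩ | ⟨hv, hu, -⟩⟩ := (SimpleGraph.fromRel_adj _ u v).1 h <;>
      exact ⟨hu, hv⟩

variable (f g dh)

lemma GseqTMax_eventually_const :
    ∃ k₀, 1 ≤ k₀ ∧ ∀ k, k₀ ≤ k → ∀ j, GseqTMax f g dh k j = GseqTMax f g dh k₀ j := by
  have hfin : (Set.range (GseqTMax f g dh)).Finite := by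
    refine (Set.Finite.pi' fun j => finite_setOf_edgesIn (Wd n (dh - dAug g j))).subset ?_
    rintro _ ⟨k, rfl⟩
    exact GseqTMax_edgesIn k
  obtain ⟨k₁, hk₁⟩ := GseqTMax_monotone.exists_forall_ge_eq_of_finite_range hfin
  refine ⟨max k₁ 1, le_max_right _ _, fun k hk j => ?_⟩
  rw [hk₁ k (le_of_max_le_left hk), hk₁ _ (le_max_left _ _)]

end GraphSequence

section CyclicSupport

variable {n m : ℕ} {f : NCPoly n} {g : Fin m → NCPoly n} {dh k : ℕ}

lemma mem_cycClosure_of_cycEq {S : Set (Word n)} {w w' : Word n} (h : w ∈ cycClosure S)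
    (hc : cycEq w' w) : w' ∈ cycClosure S :=
  let ⟨s, hs, hws⟩ := h
  ⟨s, hs, hc.trans hws⟩

lemma mem_cycClosure_iff_of_cycEq {S : Set (Word n)} {w w' : Word n} (hc : cycEq w w') :
    w ∈ cycClosure S ↔ w' ∈ cycClosure S :=
  ⟨fun h => mem_cycClosure_of_cycEq h hc.symm, fun h => mem_cycClosure_of_cycEq h hc⟩

lemma wstar_append_self_mem {q : Word n} (hq : q ∈ Wd n dh) :
    wstar q ++ q ∈ cycClosure (tsSupport f g dh k) :=
  ⟨_, Or.inr ⟨q, hq, rfl⟩, cycEq_refl _⟩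

lemma wstar_append_append_mem_of_adj {j : Fin (m + 1)} {p q s : Word n}
    (h : (GseqTMax f g dh k j).Adj p q) (hs : s ∈ (gAug g j).support) :
    wstar p ++ s ++ q ∈ cycClosure (tsSupport f g dh k) :=
  ⟨_, Or.inl (Set.mem_iUnion.2 ⟨j, p, q, s, h, hs, rfl⟩), cycEq_refl _⟩

lemma wstar_append_mem_of_eq_or_adj {p q : Word n} (hq : q ∈ Wd n dh)
    (h : p = q ∨ (GseqTMax f g dh k 0).Adj p q) :
    wstar p ++ q ∈ cycClosure (tsSupport f g dh k) := by
  rcases h with rfl | h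
  · exact wstar_append_self_mem hq
  · simpa using wstar_append_append_mem_of_adj h (nil_mem_support_gAug_zero g)

lemma mem_of_mem_Asupp {w : Word n} (hw : w ∈ Asupp f g) (hlen : w.length ≤ 2 * dh) :
    w ∈ cycClosure (tsSupport f g dh k) := by
  set p := wstar (w.take ((w.length + 1) / 2))
  set q := w.drop ((w.length + 1) / 2)
  have hpq : wstar p ++ q = w := by simp [p, q]
  have hp : p ∈ Wd n dh := by simp [p]; omega
  have hq : q ∈ Wd n dh := by simp [q]; omega
  rw [← hpq]
  refine wstar_append_mem_of_eq_or_adj hq (or_iff_not_imp_left.2 fun hne => ?_)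
  refine GseqTMax_monotone (Nat.zero_le k) 0 ((SimpleGraph.fromRel_adj _ p q).2 ⟨hne, Or.inl ?_⟩)
  exact ⟨hp, hq, w, Or.inl hw, hpq ▸ cycEq_refl _⟩

lemma tsPreGraph_reachable_of_mem {p q : Word n} (hp : p ∈ Wd n dh) (hq : q ∈ Wd n dh)
    (h : wstar p ++ q ∈ cycClosure (tsSupport f g dh k)) :
    (tsPreGraph f g dh k 0).Reachable p q :=
  SimpleGraph.reachable_fromRel_of_rel
    ⟨by simpa using hp, by simpa using hq, [], nil_mem_support_gAug_zero g, by simpa using h⟩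

lemma length_le_of_mem_support_gAug {j : Fin (m + 1)} {s : Word n}
    (hs : s ∈ (gAug g j).support) : s.length ≤ 2 * dAug g j := by
  cases j using Fin.cases with
  | zero => simp_all [support_ncOne]
  | succ i =>
    have : s.length ≤ ncDeg (g i) := Finset.le_sup (f := List.length) (by simpa [gAug] using hs)
    simp only [dAug, Fin.cases_succ, ceilHalf]
    omega

lemma dAug_le (hdh : minOrderT f g ≤ dh) (j : Fin (m + 1)) : dAug g j ≤ dh := by
  cases j using Fin.cases with
  | zero => simp
  | succ i =>
    calc dAug g i.succ = ceilHalf (ncDeg (g i)) := rfl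
      _ ≤ Finset.univ.sup fun j : Fin m => ceilHalf (ncDeg (g j)) :=
          Finset.le_sup (f := fun j : Fin m => ceilHalf (ncDeg (g j))) (Finset.mem_univ i)
      _ ≤ dh := le_trans (le_max_right _ _) hdh

lemma length_wstar_append_append_le (hdh : minOrderT f g ≤ dh) {j : Fin (m + 1)}
    {u v s : Word n} (hu : u ∈ Wd n (dh - dAug g j)) (hv : v ∈ Wd n (dh - dAug g j))
    (hs : s ∈ (gAug g j).support) : (wstar u ++ s ++ v).length ≤ 2 * dh := by
  have := length_le_of_mem_support_gAug hs
  have := dAug_le hdh j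
  simp only [mem_Wd] at hu hv
  simp only [List.length_append, length_wstar]
  omega

lemma mem_of_mem_support_gAug (hdh : minOrderT f g ≤ dh) {j : Fin (m + 1)} {s : Word n}
    (hs : s ∈ (gAug g j).support) : s ∈ cycClosure (tsSupport f g dh k) := by
  cases j using Fin.cases with
  | zero =>
    obtain rfl : s = [] := by simpa [support_ncOne] using hs
    exact wstar_append_self_mem (q := []) (by simp)
  | succ i =>
    refine mem_of_mem_Asupp (Or.inr (Set.mem_iUnion.2 ⟨i, by simpa [gAug] using hs⟩)) ?_
    simpa using length_wstar_append_append_le hdh (u := []) (v := []) (by simp) (by simp) hs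

end CyclicSupport

section Stable

variable {n m : ℕ} {f : NCPoly n} {g : Fin m → NCPoly n} {dh k : ℕ}

lemma adj_of_mem_cycClosure (hst : GseqTMax f g dh (k + 1) = GseqTMax f g dh k)
    {j : Fin (m + 1)} {p q s : Word n} (hp : p ∈ Wd n (dh - dAug g j))
    (hq : q ∈ Wd n (dh - dAug g j)) (hne : p ≠ q)
    (hs : s ∈ (gAug g j).support) (h : wstar p ++ s ++ q ∈ cycClosure (tsSupport f g dh k)) :
    (GseqTMax f g dh k j).Adj p q := by
  rw [← hst, GseqTMax_succ]
  exact le_maxCE _ ((SimpleGraph.fromRel_adj _ p q).2 ⟨hne, Or.inl ⟨hp, hq, s, hs, h⟩⟩)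

lemma wstar_append_mem_iff (hst : GseqTMax f g dh (k + 1) = GseqTMax f g dh k)
    {p q : Word n} (hp : p ∈ Wd n dh) (hq : q ∈ Wd n dh) :
    wstar p ++ q ∈ cycClosure (tsSupport f g dh k) ↔ p = q ∨ (GseqTMax f g dh k 0).Adj p q := by
  refine ⟨fun h => or_iff_not_imp_left.2 fun hne => ?_, wstar_append_mem_of_eq_or_adj hq⟩
  exact adj_of_mem_cycClosure hst (by simpa using hp) (by simpa using hq) hne
    (nil_mem_support_gAug_zero g) (by simpa using h)

lemma wstar_append_mem_of_reachable (hst : GseqTMax f g dh (k + 1) = GseqTMax f g dh k)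
    {p q : Word n} (hp : p ∈ Wd n dh) (hq : q ∈ Wd n dh)
    (h : (tsPreGraph f g dh k 0).Reachable p q) :
    wstar p ++ q ∈ cycClosure (tsSupport f g dh k) := by
  rw [wstar_append_mem_iff hst hp hq, ← hst, GseqTMax_succ]
  exact eq_or_maxCE_adj_iff.2 h

/-- Writing `c = c₁c₂`, the path `c₂⋆ — c₁ — e e c₁` in the pre-graph joins the two halves of
a rotation of `c e e`, and stability turns this reachability into membership. -/
lemma append_pair_mem (hst : GseqTMax f g dh (k + 1) = GseqTMax f g dh k)
    {c : Word n} (hc : c ∈ cycClosure (tsSupport f g dh k))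
    (hlen : c.length + 2 ≤ 2 * dh) (e : Fin n) :
    c ++ [e, e] ∈ cycClosure (tsSupport f g dh k) := by
  rcases Nat.lt_or_ge dh 2 with hdh | hdh
  · obtain rfl : c = [] := List.eq_nil_of_length_eq_zero (by omega)
    exact wstar_append_self_mem (q := [e]) (by simp; omega)
  set c₁ := c.take (c.length - dh)
  set c₂ := c.drop (c.length - dh)
  have hc₁ : c₁.length + 2 ≤ dh := by simp [c₁]; omega
  have hc₂ : c₂.length ≤ dh := by simp [c₂]; omega
  have hc₁₂ : c₁ ++ c₂ = c := List.take_append_drop _ c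
  have hp : wstar c₂ ∈ Wd n dh := by simpa using hc₂
  have hm : c₁ ∈ Wd n dh := by simp; omega
  have hq : e :: e :: c₁ ∈ Wd n dh := by simp; omega
  have hrot : cycEq (c ++ [e, e]) (wstar (wstar c₂) ++ e :: e :: c₁) := by
    rw [← hc₁₂, wstar_wstar, List.append_assoc]
    simpa using cycEq_append_comm c₁ (c₂ ++ [e, e])
  refine mem_cycClosure_of_cycEq (wstar_append_mem_of_reachable hst hp hq ?_) hrot
  refine (tsPreGraph_reachable_of_mem hp hm ?_).trans (tsPreGraph_reachable_of_mem hm hq ?_)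
  · rw [wstar_wstar]
    exact mem_cycClosure_of_cycEq hc (hc₁₂ ▸ cycEq_append_comm c₂ c₁)
  · simpa using wstar_append_self_mem (f := f) (g := g) (k := k) (q := e :: c₁) (by simp; omega)

lemma wstar_append_append_mem_of_mem (hst : GseqTMax f g dh (k + 1) = GseqTMax f g dh k)
    {c : Word n} (hc : c ∈ cycClosure (tsSupport f g dh k))
    (u : Word n) (hlen : c.length + 2 * u.length ≤ 2 * dh) :
    wstar u ++ c ++ u ∈ cycClosure (tsSupport f g dh k) := by
  induction u using List.reverseRecOn with
  | nil => simpa using hc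
  | append_singleton z e ih =>
    simp only [List.length_append, List.length_singleton] at hlen
    have hz := append_pair_mem hst (ih (by omega)) (by simp; omega) e
    refine mem_cycClosure_of_cycEq hz ?_
    simpa using cycEq_append_comm [e] (wstar z ++ c ++ z ++ [e])

lemma wstar_append_append_mem_of_mem_support
    (hst : GseqTMax f g dh (k + 1) = GseqTMax f g dh k) (hdh : minOrderT f g ≤ dh)
    {j : Fin (m + 1)} {u s : Word n} (hu : u ∈ Wd n (dh - dAug g j)) (hs : s ∈ (gAug g j).support) :
    wstar u ++ s ++ u ∈ cycClosure (tsSupport f g dh k) :=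
  wstar_append_append_mem_of_mem hst (mem_of_mem_support_gAug hdh hs) u
    (by have := length_wstar_append_append_le hdh hu hu hs; simp at this; omega)

end Stable

section Relaxations

variable {n m : ℕ} {f : NCPoly n} {g : Fin m → NCPoly n} {dh k : ℕ}

lemma length_wstar_append_le {u v : Word n} (hu : u ∈ Wd n dh) (hv : v ∈ Wd n dh) :
    (wstar u ++ v).length ≤ 2 * dh := by
  simp only [mem_Wd] at hu hv
  simp only [List.length_append, length_wstar]
  omega

variable (f g dh k) in
/-- Words longer than `2d̂` are kept so that `L_y(f)` does not change. -/
def tsTruncation (y : Word n → ℝ) : Word n → ℝ :=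
  (cycClosure (tsSupport f g dh k) ∪ {w | 2 * dh < w.length}).indicator y

lemma tsTruncation_of_length_le (y : Word n → ℝ) {w : Word n} (hw : w.length ≤ 2 * dh) :
    tsTruncation f g dh k y w = (cycClosure (tsSupport f g dh k)).indicator y w := by
  by_cases h : w ∈ cycClosure (tsSupport f g dh k)
  · simp [tsTruncation, h]
  · simp [tsTruncation, h, Set.indicator_of_notMem, hw]

lemma tsTruncation_of_mem (y : Word n → ℝ) {w : Word n}
    (hw : w ∈ cycClosure (tsSupport f g dh k)) : tsTruncation f g dh k y w = y w :=
  Set.indicator_of_mem (Set.mem_union_left _ hw) y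

lemma Ly_tsTruncation (y : Word n → ℝ) : Ly (tsTruncation f g dh k y) f = Ly y f := by
  refine Finsupp.sum_congr fun w hw => ?_
  by_cases hlen : w.length ≤ 2 * dh
  · rw [tsTruncation_of_mem y (mem_of_mem_Asupp (Or.inl hw) hlen)]
  · have hw : w ∈ cycClosure (tsSupport f g dh k) ∪ {w | 2 * dh < w.length} :=
      Or.inr (not_le.1 hlen)
    rw [tsTruncation, Set.indicator_of_mem hw]

lemma tsTruncation_nil (y : Word n → ℝ) : tsTruncation f g dh k y [] = y [] :=
  tsTruncation_of_mem y (wstar_append_self_mem (q := []) (by simp))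

lemma hadEntry_eq_tsTruncation (hst : GseqTMax f g dh (k + 1) = GseqTMax f g dh k)
    (y : Word n → ℝ) {u v : Word n} (hu : u ∈ Wd n dh) (hv : v ∈ Wd n dh) :
    hadEntry (GseqTMax f g dh k 0) y u v = tsTruncation f g dh k y (wstar u ++ v) := by
  rw [tsTruncation_of_length_le y (length_wstar_append_le hu hv)]
  simp only [hadEntry, Set.indicator_apply, wstar_append_mem_iff hst hu hv]

lemma posSemidef_locMat_tsTruncation (hst : GseqTMax f g dh (k + 1) = GseqTMax f g dh k)
    (hdh : minOrderT f g ≤ dh) {y : Word n → ℝ} {j : Fin (m + 1)}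
    (hy : Completable (Wd n (dh - dAug g j)) (GseqTMax f g dh k j)
      (locMat (Wd n (dh - dAug g j)) (gAug g j) y)) :
    (locMat (Wd n (dh - dAug g j)) (gAug g j) (tsTruncation f g dh k y)).PosSemidef := by
  obtain ⟨P, hP, hPy⟩ := hy
  let κ : Wd n (dh - dAug g j) → _ := fun u => (tsPreGraph f g dh k j).connectedComponentMk u.1
  suffices locMat _ _ (tsTruncation f g dh k y) = Matrix.of fun u v =>
      if κ u = κ v then P u v else 0 from this ▸ hP.ite_apply_eq κ
  ext u v
  have hmask : κ u = κ v ↔ u = v ∨ (GseqTMax f g dh k j).Adj u.1 v.1 := by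
    rw [SimpleGraph.ConnectedComponent.eq, ← hst, GseqTMax_succ, ← eq_or_maxCE_adj_iff,
      Subtype.ext_iff]
  simp only [Matrix.of_apply, hmask]
  split_ifs with huv
  · rw [hPy u v huv]
    refine Finsupp.sum_congr fun s hs => ?_
    rw [tsTruncation_of_mem]
    rcases huv with rfl | hadj
    · exact wstar_append_append_mem_of_mem_support hst hdh u.2 hs
    · exact wstar_append_append_mem_of_adj hadj hs
  · refine Finset.sum_eq_zero fun s hs => ?_
    dsimp only
    rw [tsTruncation_of_length_le y (length_wstar_append_append_le hdh u.2 v.2 hs),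
      Set.indicator_of_notMem, mul_zero]
    exact fun h => huv (Or.inr (adj_of_mem_cycClosure hst u.2 v.2
      (fun he => huv (Or.inl (Subtype.ext he))) hs h))

lemma tqTsValG_eq_tqDenseVal_of_stable (hst : GseqTMax f g dh (k + 1) = GseqTMax f g dh k)
    (hdh : minOrderT f g ≤ dh) :
    tqTsValG f g dh (GseqTMax f g dh k) = tqDenseVal f g dh := by
  unfold tqTsValG tqDenseVal
  congr 1
  ext r
  constructor
  · rintro ⟨y, rfl, hy₁, hcomp, hcyc⟩
    refine ⟨tsTruncation f g dh k y, (Ly_tsTruncation y).symm, by rwa [tsTruncation_nil],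
      fun j => posSemidef_locMat_tsTruncation hst hdh (hcomp j),
      fun u v w z hu hv hw hz huv => ?_⟩
    rw [← hadEntry_eq_tsTruncation hst y hu hv, ← hadEntry_eq_tsTruncation hst y hw hz]
    exact hcyc u v w z hu hv hw hz huv
  · rintro ⟨y, rfl, hy₁, hpsd, hcyc⟩
    refine ⟨y, rfl, hy₁, fun j => ⟨_, hpsd j, fun _ _ _ => rfl⟩,
      fun u v w z hu hv hw hz huv => ?_⟩
    rw [hadEntry_eq_tsTruncation hst y hu hv, hadEntry_eq_tsTruncation hst y hw hz,
      tsTruncation_of_length_le y (length_wstar_append_le hu hv),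
      tsTruncation_of_length_le y (length_wstar_append_le hw hz)]
    by_cases hk : wstar u ++ v ∈ cycClosure (tsSupport f g dh k)
    · have hk' := (mem_cycClosure_iff_of_cycEq huv).1 hk
      simp only [Set.indicator_of_mem hk, Set.indicator_of_mem hk']
      exact hcyc u v w z hu hv hw hz huv
    · have hk' := (mem_cycClosure_iff_of_cycEq huv).not.1 hk
      simp only [Set.indicator_of_notMem hk, Set.indicator_of_notMem hk']

end Relaxations

theorem stmt14_general {n m : ℕ} (f : NCPoly n) (g : Fin m → NCPoly n)
    (dh : ℕ) (hdh : minOrderT f g ≤ dh) :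
    ∃ k0 : ℕ, 1 ≤ k0 ∧
      (∀ k, k0 ≤ k → ∀ j : Fin (m + 1), GseqTMax f g dh k j = GseqTMax f g dh k0 j) ∧
      tqTsValG f g dh (GseqTMax f g dh k0) = tqDenseVal f g dh := by
  obtain ⟨k₀, hk₀, hstab⟩ := GseqTMax_eventually_const f g dh
  exact ⟨k₀, hk₀, hstab,
    tqTsValG_eq_tqDenseVal_of_stable (funext (hstab (k₀ + 1) (Nat.le_succ k₀))) hdh⟩

/-- with the maximal chordal extension, `(μ_{d̂,k}^{ts}(f,S))_{k≥1}` converges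
to `μ_{d̂}(f,S)` in finitely many steps. -/
theorem stmt14 {n m : ℕ} (f : NCPoly n) (g : Fin m → NCPoly n)
    (hsym : IsSymNC f) (hgsym : ∀ j, IsSymNC (g j))
    (dh : ℕ) (hdh : minOrderT f g ≤ dh) :
    ∃ k0 : ℕ, 1 ≤ k0 ∧
      (∀ k, k0 ≤ k → ∀ j : Fin (m + 1), GseqTMax f g dh k j = GseqTMax f g dh k0 j) ∧
      tqTsValG f g dh (GseqTMax f g dh k0) = tqDenseVal f g dh :=
  stmt14_general f g dh hdh
end
end
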